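/- Consider the S2GD algorithm with parameters 0 ≤ ν ≤ μ, 0 < h < 1/(2L), and integer m ≥ 1 such that c := (1 − νh)^m/(β μ h (1 − 2Lh)) + 2(L − μ)h/(1 − 2Lh) < 1, where β = Σ_{t=1}^m (1 − νh)^{m−t}. Then for every epoch index j ≥ 0, the iterates satisfy E[f(x_j) − f(x*)] ≤ c^j (f(x_0) − f(x*)). -/

import Mathlib

/-!
Conditionally on the past, each inner step of S2GD is an SVRG step with a uniform random index.
Co-coercivity of the convex `L`-smooth `f i` and strong convexity of `f` bound its mean square
distance to `x*`:
`E‖y_{t+1} - x*‖² ≤ (1 - νh) E‖y_t - x*‖² - 2h(1 - 2Lh) E[f(y_t) - f*] + 4(L - μ)h² E[f(x_j) - f*]`.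
Summing these bounds with the weights `(1 - νh)^(m - t)` of the law of `t_j` telescopes; with
`‖x_j - x*‖² ≤ 2 (f(x_j) - f*) / μ` this gives `E[f(x_{j+1}) - f*] ≤ c E[f(x_j) - f*]`.

All the randomness is discrete, and each iterate is a function of finitely many indices drawn
before it. This gives the independence of the next index from the current iterate, and the
integrability of every function of the iterates, without any measurability of the gradients.
-/

open MeasureTheory ProbabilityTheory Finset
open scoped RealInnerProductSpace ENNReal

theorem norm_add_sq_le_two_mul {E : Type*} [SeminormedAddCommGroup E] (u v : E) :
    ‖u + v‖ ^ 2 ≤ 2 * ‖u‖ ^ 2 + 2 * ‖v‖ ^ 2 := by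
  nlinarith [(pow_le_pow_left₀ (norm_nonneg _) (norm_add_le u v) 2).trans add_sq_le]

section InnerProductSpace

variable {E : Type*} [NormedAddCommGroup E] [InnerProductSpace ℝ E]

theorem sum_norm_sub_sq_eq {ι : Type*} (s : Finset ι) (D : ι → E) (C : E)
    (hC : ∑ i ∈ s, D i = (#s : ℝ) • C) :
    ∑ i ∈ s, ‖C - D i‖ ^ 2 = ∑ i ∈ s, ‖D i‖ ^ 2 - #s * ‖C‖ ^ 2 := by
  simp only [norm_sub_sq_real, sum_add_distrib, sum_sub_distrib, ← mul_sum, ← inner_sum, hC,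
    real_inner_smul_right, real_inner_self_eq_norm_sq, sum_const, nsmul_eq_mul]
  ring

theorem norm_sub_sq_le_of_convex_of_smooth {g : E → ℝ} {g' : E → E} {L : ℝ} (hL : 0 < L)
    (hconv : ∀ x z, g x + ⟪g' x, z - x⟫ ≤ g z)
    (hsmooth : ∀ x z, g z ≤ g x + ⟪g' x, z - x⟫ + L / 2 * ‖z - x‖ ^ 2) (u v : E) :
    ‖g' u - g' v‖ ^ 2 ≤ 2 * L * (g u - g v - ⟪g' v, u - v⟫) := by
  set w := g' u - g' v
  -- test both inequalities at the gradient step from `u` with the gradient difference `w`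
  have h1 := hconv v (u - L⁻¹ • w)
  have h2 := hsmooth u (u - L⁻¹ • w)
  rw [sub_right_comm, inner_sub_right, real_inner_smul_right] at h1
  rw [sub_sub_cancel_left, norm_neg, norm_smul, inner_neg_right, real_inner_smul_right,
    Real.norm_of_nonneg (inv_nonneg.2 hL.le)] at h2
  have hw : L⁻¹ * ⟪g' u, w⟫ - L⁻¹ * ⟪g' v, w⟫ = L⁻¹ * ‖w‖ ^ 2 := by
    rw [← mul_sub, ← inner_sub_left, real_inner_self_eq_norm_sq]
  have hsq : L / 2 * (L⁻¹ * ‖w‖) ^ 2 = L⁻¹ * ‖w‖ ^ 2 / 2 := by field_simp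
  calc ‖w‖ ^ 2 = 2 * L * (L⁻¹ * ‖w‖ ^ 2 / 2) := by field_simp
    _ ≤ 2 * L * (g u - g v - ⟪g' v, u - v⟫) := by gcongr; linarith

theorem two_mul_sub_le_norm_sq_of_strongly_convex {g : E → ℝ} {g' : E → E} {μ : ℝ} (hμ : 0 < μ)
    (hstrong : ∀ x z, g x + ⟪g' x, z - x⟫ + μ / 2 * ‖z - x‖ ^ 2 ≤ g z) (x xstar : E) :
    2 * μ * (g x - g xstar) ≤ ‖g' x‖ ^ 2 := by
  have h1 := hstrong x xstar
  have h2 := neg_le_of_abs_le (abs_real_inner_le_norm (g' x) (xstar - x))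
  nlinarith [sq_nonneg (μ * ‖xstar - x‖ - ‖g' x‖)]

theorem norm_sub_sq_le_of_strongly_convex {g : E → ℝ} {g' : E → E} {μ : ℝ} (hμ : 0 < μ)
    (hstrong : ∀ x z, g x + ⟪g' x, z - x⟫ + μ / 2 * ‖z - x‖ ^ 2 ≤ g z) {xstar : E}
    (hstar : g' xstar = 0) (x : E) : ‖x - xstar‖ ^ 2 ≤ 2 / μ * (g x - g xstar) := by
  have := hstrong xstar x
  rw [hstar, inner_zero_left, add_zero] at this
  rw [div_mul_eq_mul_div, le_div_iff₀ hμ]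
  linarith

variable [CompleteSpace E]

theorem gradient_const_mul_sum {ι : Type*} (s : Finset ι) {f : ι → E → ℝ} {z : E}
    (hf : ∀ i ∈ s, DifferentiableAt ℝ (f i) z) (c : ℝ) :
    gradient (fun x => c * ∑ i ∈ s, f i x) z = c • ∑ i ∈ s, gradient (f i) z := by
  refine HasGradientAt.gradient ?_
  rw [hasGradientAt_iff_hasFDerivAt, map_smul, map_sum]
  exact (HasFDerivAt.fun_sum fun i hi => (hf i hi).hasGradientAt.hasFDerivAt).const_mul c

theorem IsLocalMin.gradient_eq_zero {F : E → ℝ} {a : E} (h : IsLocalMin F a) :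
    gradient F a = 0 := by
  rw [gradient, h.fderiv_eq_zero, map_zero]

theorem sum_gradient_eq_smul_gradient {n : ℕ} (hn : 0 < n) {f : Fin n → E → ℝ}
    (hf : ∀ i, Differentiable ℝ (f i)) {F : E → ℝ} (hF : F = fun x => 1 / (n : ℝ) * ∑ i, f i x)
    (z : E) : ∑ i, gradient (f i) z = (n : ℝ) • gradient F z := by
  rw [hF, gradient_const_mul_sum _ fun i _ => (hf i).differentiableAt, smul_smul,
    mul_one_div_cancel (by positivity), one_smul]

variable {n : ℕ} {f : Fin n → E → ℝ} {F : E → ℝ} {L μ : ℝ} {xstar : E}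

theorem sum_norm_sq_gradient_sub_le (hL : 0 < L)
    (hconv : ∀ i x z, f i x + ⟪gradient (f i) x, z - x⟫ ≤ f i z)
    (hsmooth : ∀ i x z, f i z ≤ f i x + ⟪gradient (f i) x, z - x⟫ + L / 2 * ‖z - x‖ ^ 2)
    (hsum : ∀ z, ∑ i, f i z = n * F z) (hgrad : ∀ z, ∑ i, gradient (f i) z = (n : ℝ) • gradient F z)
    (hstar : gradient F xstar = 0) (u : E) :
    ∑ i, ‖gradient (f i) u - gradient (f i) xstar‖ ^ 2 ≤ n * (2 * L * (F u - F xstar)) := by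
  calc ∑ i, ‖gradient (f i) u - gradient (f i) xstar‖ ^ 2
      ≤ ∑ i, 2 * L * (f i u - f i xstar - ⟪gradient (f i) xstar, u - xstar⟫) :=
        sum_le_sum fun i _ => norm_sub_sq_le_of_convex_of_smooth hL (hconv i) (hsmooth i) u xstar
    _ = n * (2 * L * (F u - F xstar)) := by
        rw [← mul_sum, sum_sub_distrib, sum_sub_distrib, hsum, hsum, ← sum_inner, hgrad, hstar,
          smul_zero, inner_zero_left]
        ring

theorem sum_norm_sq_svrg_direction_le (hL : 0 < L) (hμ : 0 < μ)
    (hconv : ∀ i x z, f i x + ⟪gradient (f i) x, z - x⟫ ≤ f i z)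
    (hsmooth : ∀ i x z, f i z ≤ f i x + ⟪gradient (f i) x, z - x⟫ + L / 2 * ‖z - x‖ ^ 2)
    (hsum : ∀ z, ∑ i, f i z = n * F z) (hgrad : ∀ z, ∑ i, gradient (f i) z = (n : ℝ) • gradient F z)
    (hstrong : ∀ x z, F x + ⟪gradient F x, z - x⟫ + μ / 2 * ‖z - x‖ ^ 2 ≤ F z)
    (hstar : gradient F xstar = 0) (x y : E) :
    ∑ i, ‖gradient F x + gradient (f i) y - gradient (f i) x‖ ^ 2 ≤
      n * (4 * L * (F y - F xstar) + 4 * (L - μ) * (F x - F xstar)) := by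
  -- the direction is `A i + (∇F x - D i)`, and the second summand has mean zero, so its mean
  -- square is `mean ‖D i‖² - ‖∇F x‖²`, where `‖∇F x‖² ≥ 2μ (F x - F x*)`
  set A := fun i => gradient (f i) y - gradient (f i) xstar
  set D := fun i => gradient (f i) x - gradient (f i) xstar
  have hD_sum : ∑ i, D i = (#(univ : Finset (Fin n)) : ℝ) • gradient F x := by
    simp only [D, sum_sub_distrib, hgrad, hstar, smul_zero, sub_zero, card_univ, Fintype.card_fin]
  have hvar := sum_norm_sub_sq_eq univ D (gradient F x) hD_sum
  rw [card_univ, Fintype.card_fin] at hvar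
  have hA_sq := sum_norm_sq_gradient_sub_le hL hconv hsmooth hsum hgrad hstar y
  have hD_sq := sum_norm_sq_gradient_sub_le hL hconv hsmooth hsum hgrad hstar x
  have hPL := two_mul_sub_le_norm_sq_of_strongly_convex hμ hstrong x xstar
  have hn : (0 : ℝ) ≤ n := n.cast_nonneg
  calc ∑ i, ‖gradient F x + gradient (f i) y - gradient (f i) x‖ ^ 2
      = ∑ i, ‖A i + (gradient F x - D i)‖ ^ 2 := by
        congr! 3 with i; simp only [A, D]; abel
    _ ≤ ∑ i, (2 * ‖A i‖ ^ 2 + 2 * ‖gradient F x - D i‖ ^ 2) :=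
        sum_le_sum fun i _ => norm_add_sq_le_two_mul _ _
    _ ≤ n * (4 * L * (F y - F xstar) + 4 * (L - μ) * (F x - F xstar)) := by
        rw [sum_add_distrib, ← mul_sum, ← mul_sum, hvar]
        nlinarith [mul_le_mul_of_nonneg_left hPL hn]

theorem mean_norm_sq_s2gd_step_le (hn : 0 < n) (hL : 0 < L) (hμ : 0 < μ)
    (hconv : ∀ i x z, f i x + ⟪gradient (f i) x, z - x⟫ ≤ f i z)
    (hsmooth : ∀ i x z, f i z ≤ f i x + ⟪gradient (f i) x, z - x⟫ + L / 2 * ‖z - x‖ ^ 2)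
    (hsum : ∀ z, ∑ i, f i z = n * F z) (hgrad : ∀ z, ∑ i, gradient (f i) z = (n : ℝ) • gradient F z)
    (hstrong : ∀ x z, F x + ⟪gradient F x, z - x⟫ + μ / 2 * ‖z - x‖ ^ 2 ≤ F z)
    (hstar : gradient F xstar = 0) {h : ℝ} (hh : 0 ≤ h) (x y : E) :
    (n : ℝ)⁻¹ * ∑ i, ‖y - h • (gradient F x + gradient (f i) y - gradient (f i) x) - xstar‖ ^ 2 ≤
      (1 - μ * h) * ‖y - xstar‖ ^ 2 - 2 * h * (1 - 2 * L * h) * (F y - F xstar) +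
        4 * (L - μ) * h ^ 2 * (F x - F xstar) := by
  set G := fun i => gradient F x + gradient (f i) y - gradient (f i) x
  have hG : ∑ i, G i = (n : ℝ) • gradient F y := by
    simp only [G, sum_sub_distrib, sum_add_distrib, hgrad, sum_const, card_univ, Fintype.card_fin,
      ← Nat.cast_smul_eq_nsmul ℝ]
    abel
  have hexp : ∑ i, ‖y - h • G i - xstar‖ ^ 2 =
      n * ‖y - xstar‖ ^ 2 - 2 * h * (n * ⟪gradient F y, y - xstar⟫) + h ^ 2 * ∑ i, ‖G i‖ ^ 2 := by
    simp only [sub_right_comm y, norm_sub_sq_real (y - xstar), sum_add_distrib, sum_sub_distrib,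
      real_inner_smul_right, norm_smul, mul_pow, Real.norm_eq_abs, sq_abs, ← mul_sum, ← inner_sum,
      hG, sum_const, card_univ, Fintype.card_fin, nsmul_eq_mul]
    rw [real_inner_comm]
    ring
  have hvar := sum_norm_sq_svrg_direction_le hL hμ hconv hsmooth hsum hgrad hstrong hstar x y
  have hy := hstrong y xstar
  rw [← neg_sub y xstar, inner_neg_right, norm_neg] at hy
  have hnR : (0 : ℝ) < n := by exact_mod_cast hn
  rw [hexp, inv_mul_le_iff₀ hnR]
  nlinarith [mul_le_mul_of_nonneg_left hvar (sq_nonneg h), mul_nonneg hh hnR.le]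

end InnerProductSpace

theorem integral_comp_eq_sum_of_indepFun {Ω α : Type*} [MeasurableSpace Ω] {P : Measure Ω}
    [MeasurableSpace α] [MeasurableSingletonClass α] {U : Ω → α} (hU : Measurable U)
    {s : Finset α} (hs : ∀ ω, U ω ∈ s) {φ : α → Ω → ℝ} (hφ : ∀ a ∈ s, Integrable (φ a) P)
    (hind : ∀ a ∈ s, IndepFun U (φ a) P) :
    ∫ ω, φ (U ω) ω ∂P = ∑ a ∈ s, P.real {ω | U ω = a} * ∫ ω, φ a ω ∂P := by
  classical
  have hsplit : ∀ ω, φ (U ω) ω = ∑ a ∈ s, (U ⁻¹' {a}).indicator (φ a) ω := by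
    intro ω
    simp only [Set.indicator_apply, Set.mem_preimage, Set.mem_singleton_iff]
    rw [sum_ite_eq, if_pos (hs ω)]
  simp_rw [hsplit]
  rw [integral_finsetSum _ fun a ha => (hφ a ha).indicator (hU (measurableSet_singleton a))]
  refine sum_congr rfl fun a ha => ?_
  have hUa : IndepFun ((U ⁻¹' {a}).indicator (1 : Ω → ℝ)) (φ a) P :=
    (hind a ha).comp (φ := ({a} : Set α).indicator 1) (ψ := id)
      (measurable_one.indicator (measurableSet_singleton a)) measurable_id
  change _ = P.real (U ⁻¹' {a}) * _
  rw [← integral_indicator_one (hU (measurableSet_singleton a)),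
    ← hUa.integral_fun_mul_eq_mul_integral]
  · simp only [← Set.indicator_mul_left, Pi.one_apply, one_mul]
  · exact (measurable_one.indicator (hU (measurableSet_singleton a))).aestronglyMeasurable
  · exact (hφ a ha).aestronglyMeasurable

def DeterminedBy {Ω ι γ : Type*} (X : ι → Ω → ℕ) (S : Finset ι) (W : Ω → γ) : Prop :=
  ∀ ω ω', (∀ i ∈ S, X i ω = X i ω') → W ω = W ω'

namespace DeterminedBy

variable {Ω ι γ : Type*} {X : ι → Ω → ℕ} {S T : Finset ι} {W : Ω → γ}

theorem comp {δ : Type*} (hW : DeterminedBy X S W) (g : γ → δ) :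
    DeterminedBy X S fun ω => g (W ω) :=
  fun ω ω' h => congrArg g (hW ω ω' h)

theorem exists_eq_comp [Nonempty Ω] (hW : DeterminedBy X S W) :
    ∃ G : (S → ℕ) → γ, ∀ ω, W ω = G fun i => X i ω := by
  refine ⟨Function.extend (fun ω (i : S) => X i ω) W fun _ => W (Classical.arbitrary Ω),
    fun ω => ?_⟩
  refine (Function.FactorsThrough.extend_apply (fun ω ω' h => hW ω ω' fun i hi => ?_) _ ω).symm
  exact congrFun h ⟨i, hi⟩

theorem finite_range [Nonempty Ω] (hW : DeterminedBy X S W)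
    (hXfin : ∀ i, (Set.range (X i)).Finite) : (Set.range W).Finite := by
  obtain ⟨G, hG⟩ := hW.exists_eq_comp
  refine ((Set.Finite.pi (t := fun i : S => Set.range (X i)) fun i => hXfin i).image G).subset ?_
  rintro _ ⟨ω, rfl⟩
  exact ⟨_, fun i _ => ⟨ω, rfl⟩, (hG ω).symm⟩

theorem measurable [MeasurableSpace Ω] [Nonempty Ω] [MeasurableSpace γ] (hW : DeterminedBy X S W)
    (hXm : ∀ i, Measurable (X i)) : Measurable W := by
  obtain ⟨G, hG⟩ := hW.exists_eq_comp
  rw [funext hG]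
  exact (measurable_of_countable G).comp (measurable_pi_lambda _ fun i => hXm i)

variable [MeasurableSpace Ω] {P : Measure Ω}

theorem integrable [IsFiniteMeasure P] {W : Ω → ℝ} (hW : DeterminedBy X S W)
    (hXm : ∀ i, Measurable (X i)) (hXfin : ∀ i, (Set.range (X i)).Finite) : Integrable W P := by
  rcases isEmpty_or_nonempty Ω with hΩ | hΩ
  · exact .of_isEmpty
  obtain ⟨C, hC⟩ := ((hW.finite_range hXfin).image norm).bddAbove
  exact .of_bound (hW.measurable hXm).aestronglyMeasurable C
    (.of_forall fun ω => hC ⟨W ω, ⟨ω, rfl⟩, rfl⟩)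

theorem indepFun {α β : Type*} [MeasurableSpace α] [MeasurableSpace β]
    (hind : iIndepFun X P) (hXm : ∀ i, Measurable (X i)) {U : Ω → α} {W : Ω → β}
    (hU : DeterminedBy X S U) (hW : DeterminedBy X T W) (hST : Disjoint S T) :
    IndepFun U W P := by
  have := hind.isProbabilityMeasure
  have := nonempty_of_isProbabilityMeasure P
  obtain ⟨G, hG⟩ := hU.exists_eq_comp
  obtain ⟨H, hH⟩ := hW.exists_eq_comp
  rw [funext hG, funext hH]
  exact (hind.indepFun_finset S T hST hXm).comp (measurable_of_countable G)
    (measurable_of_countable H)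

end DeterminedBy

theorem sum_Icc_one_eq_sum_range {M : Type*} [AddCommMonoid M] (g : ℕ → M) (m : ℕ) :
    ∑ t ∈ Icc 1 m, g t = ∑ t ∈ range m, g (t + 1) := by
  rw [← Ico_add_one_right_eq_Icc, sum_Ico_eq_sum_range, Nat.add_sub_cancel]
  simp only [add_comm 1]

theorem mul_sum_pow_mul_le_of_step {m : ℕ} {r d K : ℝ} (hr : 0 ≤ r) {a b : ℕ → ℝ}
    (hstep : ∀ t < m, a (t + 1) ≤ r * a t - d * b t + K * b 0) (ham : 0 ≤ a m) :
    d * ∑ t ∈ Icc 1 m, r ^ (m - t) * b (t - 1) ≤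
      r ^ m * a 0 + K * (∑ t ∈ Icc 1 m, r ^ (m - t)) * b 0 := by
  simp only [sum_Icc_one_eq_sum_range, Nat.add_sub_cancel]
  have htel : a m - r ^ m * a 0 =
      ∑ t ∈ range m, r ^ (m - (t + 1)) * (a (t + 1) - r * a t) := by
    have := sum_range_sub (fun t => r ^ (m - t) * a t) m
    simp only [Nat.sub_self, pow_zero, one_mul, Nat.sub_zero] at this
    rw [← this]
    refine sum_congr rfl fun t ht => ?_
    rw [show m - t = m - (t + 1) + 1 by have := mem_range.1 ht; omega, pow_succ]
    ring
  have hle : ∑ t ∈ range m, r ^ (m - (t + 1)) * (a (t + 1) - r * a t) ≤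
      ∑ t ∈ range m, r ^ (m - (t + 1)) * (K * b 0 - d * b t) :=
    sum_le_sum fun t ht =>
      mul_le_mul_of_nonneg_left (by linarith [hstep t (mem_range.1 ht)]) (pow_nonneg hr _)
  have hsplit : ∑ t ∈ range m, r ^ (m - (t + 1)) * (K * b 0 - d * b t) =
      K * (∑ t ∈ range m, r ^ (m - (t + 1))) * b 0 -
        d * ∑ t ∈ range m, r ^ (m - (t + 1)) * b t := by
    simp only [mul_sub, sum_sub_distrib, mul_sum, sum_mul]
    congr 1 <;> refine sum_congr rfl fun t _ => by ring
  linarith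

section S2GD

variable {E Ω : Type*} [NormedAddCommGroup E] [InnerProductSpace ℝ E] [CompleteSpace E]
  {n : ℕ}

def s2gdCoord (idx : ℕ → ℕ → Ω → Fin n) (τ : ℕ → Ω → ℕ) : ℕ ⊕ ℕ × ℕ → Ω → ℕ :=
  Sum.elim τ fun p ω => idx p.1 p.2 ω

/-- The coordinates drawn before inner step `t` of epoch `j` (inner steps `≥ m` are never run). -/
def s2gdPast (m j t : ℕ) : Finset (ℕ ⊕ ℕ × ℕ) :=
  (range j).disjSum (range j ×ˢ range m ∪ {j} ×ˢ range t)

@[simp]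
theorem inl_mem_s2gdPast {m j t i : ℕ} : Sum.inl i ∈ s2gdPast m j t ↔ i < j := by
  simp [s2gdPast]

@[simp]
theorem inr_mem_s2gdPast {m j t i s : ℕ} :
    Sum.inr (i, s) ∈ s2gdPast m j t ↔ i < j ∧ s < m ∨ i = j ∧ s < t := by
  simp only [s2gdPast, inr_mem_disjSum, mem_union, mem_product, mem_range, mem_singleton]

theorem s2gdPast_mono {m j t t' : ℕ} (htt' : t ≤ t') : s2gdPast m j t ⊆ s2gdPast m j t' := by
  rintro (i | ⟨i, s⟩) <;> simp only [inl_mem_s2gdPast, inr_mem_s2gdPast] <;> omega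

theorem s2gdPast_subset_succ {m j t : ℕ} (ht : t ≤ m) : s2gdPast m j t ⊆ s2gdPast m (j + 1) 0 := by
  rintro (i | ⟨i, s⟩) <;> simp only [inl_mem_s2gdPast, inr_mem_s2gdPast] <;> omega

/-- `y j t` is the inner iterate `y_{j,t}`, `idx j t` is `i_{j,t}` and `τ j` is the epoch
length `t_j`. -/
structure IsS2GDRun [MeasurableSpace Ω] (P : Measure Ω) (f : Fin n → E → ℝ) (F : E → ℝ) (h : ℝ)
    (m : ℕ) (x0 : E) (idx : ℕ → ℕ → Ω → Fin n) (τ : ℕ → Ω → ℕ) (x : ℕ → Ω → E)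
    (y : ℕ → ℕ → Ω → E) : Prop where
  measurable_idx : ∀ j t, Measurable (idx j t)
  measurable_τ : ∀ j, Measurable (τ j)
  τ_mem : ∀ j ω, τ j ω ∈ Icc 1 m
  iIndepFun : iIndepFun (s2gdCoord idx τ) P
  x_zero : ∀ ω, x 0 ω = x0
  y_zero : ∀ j ω, y j 0 ω = x j ω
  y_succ : ∀ j t ω, t < m → y j (t + 1) ω = y j t ω -
    h • (gradient F (x j ω) + gradient (f (idx j t ω)) (y j t ω) - gradient (f (idx j t ω)) (x j ω))
  x_succ : ∀ j ω, x (j + 1) ω = y j (τ j ω - 1) ω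

namespace IsS2GDRun

variable [MeasurableSpace Ω] {P : Measure Ω} {f : Fin n → E → ℝ} {F : E → ℝ} {h : ℝ} {m : ℕ}
  {x0 : E} {idx : ℕ → ℕ → Ω → Fin n} {τ : ℕ → Ω → ℕ} {x : ℕ → Ω → E} {y : ℕ → ℕ → Ω → E}

theorem measurable_coord (run : IsS2GDRun P f F h m x0 idx τ x y) :
    ∀ i, Measurable (s2gdCoord idx τ i)
  | .inl j => run.measurable_τ j
  | .inr p => by exact (measurable_of_countable Fin.val).comp (run.measurable_idx p.1 p.2)

theorem finite_range_coord (run : IsS2GDRun P f F h m x0 idx τ x y) :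
    ∀ i, (Set.range (s2gdCoord idx τ i)).Finite
  | .inl j => (Set.finite_Icc 1 m).subset <| Set.range_subset_iff.2 fun ω => by
      simpa [s2gdCoord] using run.τ_mem j ω
  | .inr p => (Set.finite_Iio n).subset <| Set.range_subset_iff.2 fun ω => (idx p.1 p.2 ω).isLt

theorem determinedBy_y_of_x (run : IsS2GDRun P f F h m x0 idx τ x y) {j : ℕ}
    (hx : DeterminedBy (s2gdCoord idx τ) (s2gdPast m j 0) (x j)) :
    ∀ t ≤ m, DeterminedBy (s2gdCoord idx τ) (s2gdPast m j t) (y j t)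
  | 0, _ => fun ω ω' hω => by simpa only [run.y_zero] using hx ω ω' hω
  | t + 1, ht => fun ω ω' hω => by
      have hy := run.determinedBy_y_of_x hx t (by omega) ω ω' fun i hi =>
        hω i (s2gdPast_mono t.le_succ hi)
      have hxj := hx ω ω' fun i hi => hω i (s2gdPast_mono t.succ.zero_le hi)
      have hidx : idx j t ω = idx j t ω' := Fin.ext (hω (.inr (j, t)) (by simp))
      rw [run.y_succ j t ω (by omega), run.y_succ j t ω' (by omega), hy, hxj, hidx]

theorem determinedBy_x (run : IsS2GDRun P f F h m x0 idx τ x y) :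
    ∀ j, DeterminedBy (s2gdCoord idx τ) (s2gdPast m j 0) (x j)
  | 0 => fun ω ω' _ => by rw [run.x_zero, run.x_zero]
  | j + 1 => fun ω ω' hω => by
      have hτ : τ j ω = τ j ω' := hω (.inl j) (by simp)
      have hle : τ j ω - 1 ≤ m := by have := mem_Icc.1 (run.τ_mem j ω); omega
      rw [run.x_succ, run.x_succ, ← hτ]
      exact run.determinedBy_y_of_x (run.determinedBy_x j) _ hle ω ω' fun i hi =>
        hω i (s2gdPast_subset_succ hle hi)

theorem determinedBy (run : IsS2GDRun P f F h m x0 idx τ x y) {j t : ℕ} (ht : t ≤ m) :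
    DeterminedBy (s2gdCoord idx τ) (s2gdPast m j t) fun ω => (x j ω, y j t ω) :=
  fun ω ω' hω => Prod.ext
    (run.determinedBy_x j ω ω' fun i hi => hω i (s2gdPast_mono t.zero_le hi))
    (run.determinedBy_y_of_x (run.determinedBy_x j) t ht ω ω' hω)

variable [IsFiniteMeasure P]

theorem integrable_comp (run : IsS2GDRun P f F h m x0 idx τ x y) {j t : ℕ} (ht : t ≤ m)
    (φ : E × E → ℝ) : Integrable (fun ω => φ (x j ω, y j t ω)) P :=
  ((run.determinedBy ht).comp φ).integrable run.measurable_coord run.finite_range_coord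

theorem integral_comp_y_succ (run : IsS2GDRun P f F h m x0 idx τ x y)
    (hunif : ∀ j t i, P {ω | idx j t ω = i} = (n : ℝ≥0∞)⁻¹) {j t : ℕ} (ht : t < m)
    (φ : E → ℝ) :
    ∫ ω, φ (y j (t + 1) ω) ∂P = ∫ ω, (n : ℝ)⁻¹ * ∑ i, φ (y j t ω -
      h • (gradient F (x j ω) + gradient (f i) (y j t ω) - gradient (f i) (x j ω))) ∂P := by
  set ψ : Fin n → E × E → ℝ := fun i p =>
    φ (p.2 - h • (gradient F p.1 + gradient (f i) p.2 - gradient (f i) p.1))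
  have hψ : ∀ i, Integrable (fun ω => ψ i (x j ω, y j t ω)) P := fun i =>
    run.integrable_comp ht.le (ψ i)
  have hidx : DeterminedBy (s2gdCoord idx τ) {.inr (j, t)} (idx j t) := fun ω ω' hω =>
    Fin.ext (hω _ (mem_singleton_self _))
  calc ∫ ω, φ (y j (t + 1) ω) ∂P = ∫ ω, ψ (idx j t ω) (x j ω, y j t ω) ∂P := by
        simp_rw [run.y_succ j t _ ht]
        rfl
    _ = ∑ i, P.real {ω | idx j t ω = i} * ∫ ω, ψ i (x j ω, y j t ω) ∂P :=
        integral_comp_eq_sum_of_indepFun (run.measurable_idx j t) (fun _ => mem_univ _)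
          (fun i _ => hψ i) fun i _ => hidx.indepFun run.iIndepFun run.measurable_coord
            ((run.determinedBy ht.le).comp (ψ i)) (disjoint_singleton_left.2 (by simp))
    _ = _ := by
        rw [integral_const_mul, integral_finsetSum _ fun i _ => hψ i, mul_sum]
        simp [measureReal_def, hunif]

theorem integral_comp_x_succ (run : IsS2GDRun P f F h m x0 idx τ x y) (j : ℕ) (φ : E → ℝ) :
    ∫ ω, φ (x (j + 1) ω) ∂P =
      ∑ t ∈ Icc 1 m, P.real {ω | τ j ω = t} * ∫ ω, φ (y j (t - 1) ω) ∂P := by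
  have hτ : DeterminedBy (s2gdCoord idx τ) {.inl j} (τ j) := fun ω ω' hω =>
    hω _ (mem_singleton_self _)
  have hle : ∀ t ∈ Icc 1 m, t - 1 ≤ m := fun t ht => by rw [mem_Icc] at ht; omega
  simp_rw [run.x_succ]
  exact integral_comp_eq_sum_of_indepFun (run.measurable_τ j) (run.τ_mem j)
    (fun t ht => run.integrable_comp (hle t ht) fun p => φ p.2) fun t ht =>
      hτ.indepFun run.iIndepFun run.measurable_coord
        ((run.determinedBy (hle t ht)).comp fun p => φ p.2) (disjoint_singleton_left.2 (by simp))

theorem integral_norm_sub_sq_succ_le (run : IsS2GDRun P f F h m x0 idx τ x y)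
    (hunif : ∀ j t i, P {ω | idx j t ω = i} = (n : ℝ≥0∞)⁻¹) {xstar : E} {r d K : ℝ}
    (hstep : ∀ u v : E, (n : ℝ)⁻¹ * ∑ i, ‖v - h • (gradient F u + gradient (f i) v -
      gradient (f i) u) - xstar‖ ^ 2 ≤
        r * ‖v - xstar‖ ^ 2 - d * (F v - F xstar) + K * (F u - F xstar))
    {j t : ℕ} (ht : t < m) :
    ∫ ω, ‖y j (t + 1) ω - xstar‖ ^ 2 ∂P ≤ r * ∫ ω, ‖y j t ω - xstar‖ ^ 2 ∂P -
      d * ∫ ω, (F (y j t ω) - F xstar) ∂P + K * ∫ ω, (F (x j ω) - F xstar) ∂P := by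
  have hA : Integrable (fun ω => ‖y j t ω - xstar‖ ^ 2) P :=
    run.integrable_comp ht.le fun p => ‖p.2 - xstar‖ ^ 2
  have hB : Integrable (fun ω => F (y j t ω) - F xstar) P :=
    run.integrable_comp ht.le fun p => F p.2 - F xstar
  have hC : Integrable (fun ω => F (x j ω) - F xstar) P :=
    run.integrable_comp ht.le fun p => F p.1 - F xstar
  have hAB : Integrable (fun ω => r * ‖y j t ω - xstar‖ ^ 2 - d * (F (y j t ω) - F xstar)) P :=
    (hA.const_mul r).sub (hB.const_mul d)
  rw [run.integral_comp_y_succ hunif ht fun z => ‖z - xstar‖ ^ 2, ← integral_const_mul,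
    ← integral_const_mul, ← integral_const_mul, ← integral_sub (hA.const_mul r) (hB.const_mul d),
    ← integral_add hAB (hC.const_mul K)]
  exact integral_mono_of_nonneg (.of_forall fun ω => by positivity) (hAB.fun_add (hC.const_mul K))
    (.of_forall fun ω => hstep _ _)

theorem integral_sub_x_succ_le (run : IsS2GDRun P f F h m x0 idx τ x y)
    (hunif : ∀ j t i, P {ω | idx j t ω = i} = (n : ℝ≥0∞)⁻¹) {r β : ℝ} (hr : 0 ≤ r)
    (hβ : β = ∑ t ∈ Icc 1 m, r ^ (m - t))
    (hτdist : ∀ j, ∀ t ∈ Icc 1 m, P {ω | τ j ω = t} = ENNReal.ofReal (r ^ (m - t) / β))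
    {xstar : E} {d K q : ℝ}
    (hstep : ∀ u v : E, (n : ℝ)⁻¹ * ∑ i, ‖v - h • (gradient F u + gradient (f i) v -
      gradient (f i) u) - xstar‖ ^ 2 ≤
        r * ‖v - xstar‖ ^ 2 - d * (F v - F xstar) + K * (F u - F xstar))
    (hgrowth : ∀ z, ‖z - xstar‖ ^ 2 ≤ q * (F z - F xstar)) (j : ℕ) :
    d * ∫ ω, (F (x (j + 1) ω) - F xstar) ∂P ≤
      (q * r ^ m + K * β) / β * ∫ ω, (F (x j ω) - F xstar) ∂P := by
  set a := fun t => ∫ ω, ‖y j t ω - xstar‖ ^ 2 ∂P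
  set b := fun t => ∫ ω, (F (y j t ω) - F xstar) ∂P
  have hb0 : b 0 = ∫ ω, (F (x j ω) - F xstar) ∂P := by simp_rw [b, run.y_zero]
  have ha0 : a 0 ≤ q * b 0 := by
    rw [← integral_const_mul]
    exact integral_mono (run.integrable_comp m.zero_le fun p => ‖p.2 - xstar‖ ^ 2)
      (run.integrable_comp m.zero_le fun p => q * (F p.2 - F xstar)) fun ω => hgrowth _
  have hβ0 : 0 ≤ β := hβ ▸ sum_nonneg fun t _ => pow_nonneg hr _
  have hx : ∫ ω, (F (x (j + 1) ω) - F xstar) ∂P = β⁻¹ * ∑ t ∈ Icc 1 m, r ^ (m - t) * b (t - 1) := by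
    rw [run.integral_comp_x_succ j fun z => F z - F xstar, mul_sum]
    refine sum_congr rfl fun t ht => ?_
    rw [measureReal_def, hτdist j t ht, ENNReal.toReal_ofReal (by positivity)]
    ring
  have htel := mul_sum_pow_mul_le_of_step hr (a := a) (b := b)
    (fun t ht => hb0 ▸ run.integral_norm_sub_sq_succ_le hunif hstep ht)
    (integral_nonneg fun _ => sq_nonneg _)
  rw [← hβ] at htel
  rw [hx, ← hb0]
  calc d * (β⁻¹ * ∑ t ∈ Icc 1 m, r ^ (m - t) * b (t - 1))
      = β⁻¹ * (d * ∑ t ∈ Icc 1 m, r ^ (m - t) * b (t - 1)) := by ring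
    _ ≤ β⁻¹ * (r ^ m * (q * b 0) + K * β * b 0) := by
        gcongr
        exact htel.trans (by gcongr)
    _ = (q * r ^ m + K * β) / β * b 0 := by ring

end IsS2GDRun
end S2GD

theorem s2gd_convergence_in_expectation_general
    {E : Type*} [NormedAddCommGroup E] [InnerProductSpace ℝ E] [CompleteSpace E]
    {n : ℕ} (hn : 0 < n) (f : Fin n → E → ℝ) {L μ : ℝ} (hL : 0 < L)
    (hμpos : 0 < μ) (hμL : μ ≤ L)
    (hdiff : ∀ i, Differentiable ℝ (f i))
    (hconv : ∀ i, ∀ x z : E, f i x + ⟪gradient (f i) x, z - x⟫ ≤ f i z)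
    (hsmooth : ∀ i, ∀ x z : E,
      f i z ≤ f i x + ⟪gradient (f i) x, z - x⟫ + L / 2 * ‖z - x‖ ^ 2)
    (favg : E → ℝ) (hfavg : favg = fun x => (1 / (n : ℝ)) * ∑ i, f i x)
    (hstrong : ∀ x z : E,
      favg x + ⟪gradient favg x, z - x⟫ + μ / 2 * ‖z - x‖ ^ 2 ≤ favg z)
    (xstar : E) (hmin : ∀ z : E, favg xstar ≤ favg z)
    -- parameters of the method
    {ν h : ℝ} (hνμ : ν ≤ μ) (hh0 : 0 < h) (hh : h < 1 / (2 * L))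
    {m : ℕ} (hm : 1 ≤ m)
    {β : ℝ} (hβ : β = ∑ t ∈ Finset.Icc 1 m, (1 - ν * h) ^ (m - t))
    {c : ℝ}
    (hc : c = (1 - ν * h) ^ m / (β * μ * h * (1 - 2 * L * h)) +
        2 * (L - μ) * h / (1 - 2 * L * h))
    -- the underlying probability space and the randomness of the method
    {Ω : Type*} [MeasurableSpace Ω] (P : Measure Ω) [IsProbabilityMeasure P]
    (idx : ℕ → ℕ → Ω → Fin n) (hidxmeas : ∀ j t, Measurable (idx j t))
    (hidxunif : ∀ j t (i : Fin n), P {ω | idx j t ω = i} = (n : ENNReal)⁻¹)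
    (τ : ℕ → Ω → ℕ) (hτmeas : ∀ j, Measurable (τ j))
    (hτrange : ∀ j ω, τ j ω ∈ Finset.Icc 1 m)
    (hτdist : ∀ j, ∀ t ∈ Finset.Icc 1 m,
      P {ω | τ j ω = t} = ENNReal.ofReal ((1 - ν * h) ^ (m - t) / β))
    -- all the random indices and epoch lengths are mutually independent
    (hindep : iIndepFun (m := fun _ : ℕ ⊕ (ℕ × ℕ) => (inferInstance : MeasurableSpace ℕ))
      (Sum.elim (fun j => fun ω => τ j ω)
        (fun p => fun ω => ((idx p.1 p.2 ω : Fin n) : ℕ))) P)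
    -- the iterates of the method
    (x0 : E) (x : ℕ → Ω → E) (y : ℕ → ℕ → Ω → E)
    (hx0 : ∀ ω, x 0 ω = x0)
    (hy0 : ∀ j ω, y j 0 ω = x j ω)
    (hyrec : ∀ j t ω, t < m →
      y j (t + 1) ω = y j t ω -
        h • (gradient favg (x j ω) + gradient (f (idx j t ω)) (y j t ω) -
          gradient (f (idx j t ω)) (x j ω)))
    (hxrec : ∀ j ω, x (j + 1) ω = y j (τ j ω - 1) ω) :
    ∀ j : ℕ, ∫ ω, (favg (x j ω) - favg xstar) ∂P ≤ c ^ j * (favg x0 - favg xstar) := by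
  have h2Lh : 0 < 1 - 2 * L * h := by
    rw [lt_div_iff₀ (by positivity)] at hh
    linarith
  have hr : 0 < 1 - ν * h := by
    nlinarith [mul_le_mul_of_nonneg_right (hνμ.trans hμL) hh0.le]
  have hβpos : 0 < β := hβ ▸ sum_pos (fun t _ => pow_pos hr _) ⟨m, by simp [hm]⟩
  have hsum : ∀ z, ∑ i, f i z = n * favg z := fun z => by
    rw [hfavg]
    field_simp
  have hgrad := sum_gradient_eq_smul_gradient hn hdiff hfavg
  have hstar : gradient favg xstar = 0 := IsLocalMin.gradient_eq_zero (.of_forall hmin)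
  have run : IsS2GDRun P f favg h m x0 idx τ x y :=
    ⟨hidxmeas, hτmeas, hτrange, hindep, hx0, hy0, hyrec, hxrec⟩
  have hepoch : ∀ j, ∫ ω, (favg (x (j + 1) ω) - favg xstar) ∂P ≤
      c * ∫ ω, (favg (x j ω) - favg xstar) ∂P := fun j => by
    have hstep := fun u v =>
      (mean_norm_sq_s2gd_step_le hn hL hμpos hconv hsmooth hsum hgrad hstrong hstar hh0.le u v
        ).trans (by gcongr : _ ≤ (1 - ν * h) * ‖v - xstar‖ ^ 2 - _ + _)
    refine le_of_mul_le_mul_left ((run.integral_sub_x_succ_le hidxunif hr.le hβ hτdist hstep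
      (norm_sub_sq_le_of_strongly_convex hμpos hstrong hstar) j).trans_eq ?_)
      (by positivity : 0 < 2 * h * (1 - 2 * L * h))
    rw [hc]
    -- as an atom, `1 - 2 * L * h` is seen to be nonzero by `field_simp`
    generalize 1 - 2 * L * h = D at h2Lh ⊢
    field_simp
    ring
  have hc0 : 0 ≤ c := by
    have := sub_nonneg.2 hμL
    rw [hc]
    positivity
  intro j
  induction j with
  | zero => simp [hx0]
  | succ j ih => exact (hepoch j).trans (by rw [pow_succ', mul_assoc]; gcongr)

/-- Theorem 4 of the S2GD paper: linear convergence in expectation of S2GD.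
If `c = (1 − νh)^m/(β μ h (1 − 2Lh)) + 2(L − μ)h/(1 − 2Lh) < 1`, then for every epoch `j`,
`E[f(x_j) − f(x*)] ≤ c^j (f(x_0) − f(x*))`. -/
theorem s2gd_convergence_in_expectation
    {E : Type*} [NormedAddCommGroup E] [InnerProductSpace ℝ E] [CompleteSpace E]
    {n : ℕ} (hn : 0 < n) (f : Fin n → E → ℝ) {L μ : ℝ} (hL : 0 < L)
    (hμpos : 0 < μ) (hμL : μ ≤ L)
    (hdiff : ∀ i, Differentiable ℝ (f i))
    (hconv : ∀ i, ∀ x z : E, f i x + ⟪gradient (f i) x, z - x⟫ ≤ f i z)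
    (hsmooth : ∀ i, ∀ x z : E,
      f i z ≤ f i x + ⟪gradient (f i) x, z - x⟫ + L / 2 * ‖z - x‖ ^ 2)
    (favg : E → ℝ) (hfavg : favg = fun x => (1 / (n : ℝ)) * ∑ i, f i x)
    (hstrong : ∀ x z : E,
      favg x + ⟪gradient favg x, z - x⟫ + μ / 2 * ‖z - x‖ ^ 2 ≤ favg z)
    (xstar : E) (hmin : ∀ z : E, favg xstar ≤ favg z)
    -- parameters of the method
    {ν h : ℝ} (hν0 : 0 ≤ ν) (hνμ : ν ≤ μ) (hh0 : 0 < h) (hh : h < 1 / (2 * L))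
    {m : ℕ} (hm : 1 ≤ m)
    {β : ℝ} (hβ : β = ∑ t ∈ Finset.Icc 1 m, (1 - ν * h) ^ (m - t))
    {c : ℝ}
    (hc : c = (1 - ν * h) ^ m / (β * μ * h * (1 - 2 * L * h)) +
        2 * (L - μ) * h / (1 - 2 * L * h))
    (hc1 : c < 1)
    -- the underlying probability space and the randomness of the method
    {Ω : Type*} [MeasurableSpace Ω] (P : Measure Ω) [IsProbabilityMeasure P]
    (idx : ℕ → ℕ → Ω → Fin n) (hidxmeas : ∀ j t, Measurable (idx j t))
    (hidxunif : ∀ j t (i : Fin n), P {ω | idx j t ω = i} = (n : ENNReal)⁻¹)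
    (τ : ℕ → Ω → ℕ) (hτmeas : ∀ j, Measurable (τ j))
    (hτrange : ∀ j ω, τ j ω ∈ Finset.Icc 1 m)
    (hτdist : ∀ j, ∀ t ∈ Finset.Icc 1 m,
      P {ω | τ j ω = t} = ENNReal.ofReal ((1 - ν * h) ^ (m - t) / β))
    -- all the random indices and epoch lengths are mutually independent
    (hindep : iIndepFun (m := fun _ : ℕ ⊕ (ℕ × ℕ) => (inferInstance : MeasurableSpace ℕ))
      (Sum.elim (fun j => fun ω => τ j ω)
        (fun p => fun ω => ((idx p.1 p.2 ω : Fin n) : ℕ))) P)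
    -- the iterates of the method
    (x0 : E) (x : ℕ → Ω → E) (y : ℕ → ℕ → Ω → E)
    (hx0 : ∀ ω, x 0 ω = x0)
    (hy0 : ∀ j ω, y j 0 ω = x j ω)
    (hyrec : ∀ j t ω, t < m →
      y j (t + 1) ω = y j t ω -
        h • (gradient favg (x j ω) + gradient (f (idx j t ω)) (y j t ω) -
          gradient (f (idx j t ω)) (x j ω)))
    (hxrec : ∀ j ω, x (j + 1) ω = y j (τ j ω - 1) ω) :
    ∀ j : ℕ, ∫ ω, (favg (x j ω) - favg xstar) ∂P ≤ c ^ j * (favg x0 - favg xstar) :=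
  s2gd_convergence_in_expectation_general hn f hL hμpos hμL hdiff hconv hsmooth favg hfavg hstrong
    xstar hmin hνμ hh0 hh hm hβ hc P idx hidxmeas hidxunif τ hτmeas hτrange hτdist hindep x0 x y hx0
    hy0 hyrec hxrec
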